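/- arXiv:2511.20815 — 2 statements merged into one kernel-verified Lean document; each statement's English description precedes it below -/
import Mathlib

section
/- Let U₁ ∈ ℝ^{N×(M-1)} have (reduced) singular value decomposition U₁ = V Σ Wᵀ with V ∈ ℝ^{N×r} having orthonormal columns, Σ ∈ ℝ^{r×r} invertible diagonal, and W ∈ ℝ^{(M-1)×r} having orthonormal columns. Define A = U₂ W Σ⁻¹ Vᵀ and à = Vᵀ A V. If ψ ∈ ℝ^r is an eigenvector of à with eigenvalue λ ≠ 0, then φ = U₂ W Σ⁻¹ ψ satisfies A φ = λ φ. -/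
open Matrix

/-- Exact DMD modes: if `ψ` is an eigenvector of the reduced DMD operator
`Ã = Vᵀ A V` with eigenvalue `λ ≠ 0`, then `φ = U₂ W Σ⁻¹ ψ` is an eigenvector
of the full operator `A = U₂ W Σ⁻¹ Vᵀ` with the same eigenvalue. -/
theorem dmd_exact_modes {N M r : ℕ}
    (U₁ U₂ : Matrix (Fin N) (Fin (M - 1)) ℝ)
    (V : Matrix (Fin N) (Fin r) ℝ) (S : Matrix (Fin r) (Fin r) ℝ)
    (d : Fin r → ℝ) (W : Matrix (Fin (M - 1)) (Fin r) ℝ)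
    (hV : Vᵀ * V = 1) (hW : Wᵀ * W = 1)
    (hSdiag : S = Matrix.diagonal d) (hS : IsUnit S)
    (hSVD : U₁ = V * S * Wᵀ)
    (A : Matrix (Fin N) (Fin N) ℝ) (hA : A = U₂ * W * S⁻¹ * Vᵀ)
    (Atil : Matrix (Fin r) (Fin r) ℝ) (hAtil : Atil = Vᵀ * A * V)
    (lam : ℝ) (hlam : lam ≠ 0) (ψ : Fin r → ℝ) (hψ : ψ ≠ 0)
    (heig : Atil.mulVec ψ = lam • ψ) :
    A.mulVec ((U₂ * W * S⁻¹).mulVec ψ) = lam • (U₂ * W * S⁻¹).mulVec ψ := by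
  set B := U₂ * W * S⁻¹ with hB
  have hAtil' : Atil = Vᵀ * B := by
    rw [hAtil, hA, show Vᵀ * (B * Vᵀ) * V = Vᵀ * B * (Vᵀ * V) by simp only [Matrix.mul_assoc], hV, mul_one]
  have key : A * B = B * Atil := by
    rw [hA, hAtil']; simp only [Matrix.mul_assoc]
  calc A.mulVec (B.mulVec ψ) = (A * B).mulVec ψ := by rw [mulVec_mulVec]
    _ = B.mulVec (Atil.mulVec ψ) := by rw [key, ← mulVec_mulVec]
    _ = lam • B.mulVec ψ := by rw [heig, mulVec_smul]
end

section
/- Let Φ ∈ ℂ^{N×r} have full column rank and let V_and ∈ ℂ^{r×M} have full row rank. Then the function b ↦ ‖X − Φ diag(b) V_and‖_F² is a strictly convex quadratic in b ∈ ℂ^r whose unique minimizer solves the linear system ((Φ*Φ) ∘ conj(V_and V_and*)) b = conj(diag(V_and X* Φ)), where ∘ denotes the Hadamard product. -/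
/-!
Viewed in the Euclidean space of `N × M` matrices, whose norm is the Frobenius norm,
`T b = Φ diag(b) V` is a linear map, injective by the rank hypotheses, and
`f b = ‖X - T b‖²` is a least-squares objective. Precomposing the strictly convex `‖·‖²` with
the injective affine map `b ↦ X - T b` keeps it strictly convex, so it has at most one
minimizer; the orthogonal projection of `X` onto the range of `T` provides one, and it is
characterized by the normal equations `⟪T eₖ, X - T b⟫ = 0`. Since `T eₖ` is the rank-one
matrix `Φ_{:,k} V_{k,:}`, the Gram matrix `⟪T eₖ, T eⱼ⟫` is the Hadamard product
`(Φ*Φ) ∘ conj(V V*)`, which turns the normal equations into the stated linear system.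
-/

open Set Matrix

theorem strictConvexOn_univ_norm_sq {F : Type*} [NormedAddCommGroup F] [InnerProductSpace ℝ F] :
    StrictConvexOn ℝ univ (fun x : F => ‖x‖ ^ 2) :=
  (strongConvexOn_iff_convex.2 (by simpa using convexOn_const (0 : ℝ) convex_univ)).strictConvexOn
    two_pos

theorem StrictConvexOn.comp_affineMap_of_injective {𝕜 E F β : Type*} [Ring 𝕜] [PartialOrder 𝕜]
    [AddCommGroup E] [AddCommGroup F] [AddCommMonoid β] [PartialOrder β] [Module 𝕜 E]
    [Module 𝕜 F] [SMul 𝕜 β] {f : F → β} {s : Set F} (hf : StrictConvexOn 𝕜 s f)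
    (g : E →ᵃ[𝕜] F) (hg : Function.Injective g) : StrictConvexOn 𝕜 (g ⁻¹' s) (f ∘ g) :=
  ⟨hf.1.affine_preimage g, fun x hx y hy hxy a b ha hb hab => by
    simpa only [Function.comp_apply, Convex.combo_affine_apply hab] using
      hf.2 hx hy (hg.ne hxy) ha hb hab⟩

section LeastSquares

variable {𝕜 V E : Type*} [RCLike 𝕜] [AddCommGroup V] [Module 𝕜 V]
  [NormedAddCommGroup E] [InnerProductSpace 𝕜 E]

theorem strictConvexOn_norm_sub_sq [Module ℝ V] [IsScalarTower ℝ 𝕜 V] {T : V →ₗ[𝕜] E}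
    (hT : Function.Injective T) (x : E) :
    StrictConvexOn ℝ univ (fun b => ‖x - T b‖ ^ 2) := by
  -- `re ⟪·, ·⟫` is a real inner product with the same norm; Mathlib does not make it an instance
  let _ : InnerProductSpace ℝ E := InnerProductSpace.rclikeToReal 𝕜 E
  let g : V →ᵃ[ℝ] E := AffineMap.const ℝ V x - (T.restrictScalars ℝ).toAffineMap
  have hg : Function.Injective g := fun b c h => hT (by simpa [g] using h)
  exact (strictConvexOn_univ_norm_sq (F := E)).comp_affineMap_of_injective g hg

theorem isMinOn_norm_sub_sq_of_inner_eq_zero {T : V →ₗ[𝕜] E} {x : E} {b₀ : V}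
    (h : ∀ c, inner 𝕜 (T c) (x - T b₀) = 0) : IsMinOn (fun b => ‖x - T b‖ ^ 2) univ b₀ := by
  refine isMinOn_univ_iff.2 fun b => ?_
  have hpyth := norm_add_sq_eq_norm_sq_add_norm_sq_of_inner_eq_zero (x - T b₀) (T (b₀ - b))
    (inner_eq_zero_symm.1 (h _))
  rw [map_sub, sub_add_sub_cancel] at hpyth
  nlinarith [mul_self_nonneg ‖T (b₀ - b)‖]

theorem exists_inner_sub_eq_zero [FiniteDimensional 𝕜 V] (T : V →ₗ[𝕜] E) (x : E) :
    ∃ b₀, ∀ c, inner 𝕜 (T c) (x - T b₀) = 0 := by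
  obtain ⟨b₀, hb₀⟩ := LinearMap.mem_range.1 ((LinearMap.range T).starProjection_apply_mem x)
  refine ⟨b₀, fun c => ?_⟩
  rw [hb₀]
  exact (LinearMap.range T).sub_starProjection_mem_orthogonal x (T c) (LinearMap.mem_range_self T c)

variable [FiniteDimensional 𝕜 V] [Module ℝ V] [IsScalarTower ℝ 𝕜 V] {T : V →ₗ[𝕜] E}

theorem isMinOn_norm_sub_sq_iff (hT : Function.Injective T) {x : E} {b : V} :
    IsMinOn (fun b => ‖x - T b‖ ^ 2) univ b ↔ ∀ c, inner 𝕜 (T c) (x - T b) = 0 := by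
  refine ⟨fun hb => ?_, isMinOn_norm_sub_sq_of_inner_eq_zero⟩
  obtain ⟨b₀, hb₀⟩ := exists_inner_sub_eq_zero T x
  obtain rfl := (strictConvexOn_norm_sub_sq hT x).eq_of_isMinOn hb
    (isMinOn_norm_sub_sq_of_inner_eq_zero hb₀) trivial trivial
  exact hb₀

theorem existsUnique_isMinOn_norm_sub_sq (hT : Function.Injective T) (x : E) :
    ∃! b, IsMinOn (fun b => ‖x - T b‖ ^ 2) univ b := by
  obtain ⟨b₀, hb₀⟩ := exists_inner_sub_eq_zero T x
  have hmin := (isMinOn_norm_sub_sq_iff hT).2 hb₀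
  exact ⟨b₀, hmin, fun b hb =>
    (strictConvexOn_norm_sub_sq hT x).eq_of_isMinOn hb hmin trivial trivial⟩

end LeastSquares

section Flatten

variable {𝕜 n m : Type*}

def Matrix.flatten (A : Matrix n m 𝕜) : EuclideanSpace 𝕜 (n × m) :=
  WithLp.toLp 2 fun p => A p.1 p.2

@[simp]
theorem Matrix.flatten_apply (A : Matrix n m 𝕜) (p : n × m) : A.flatten p = A p.1 p.2 := rfl

variable [RCLike 𝕜]

theorem Matrix.flatten_add (A B : Matrix n m 𝕜) : (A + B).flatten = A.flatten + B.flatten := rfl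

theorem Matrix.flatten_sub (A B : Matrix n m 𝕜) : (A - B).flatten = A.flatten - B.flatten := rfl

theorem Matrix.flatten_smul (a : 𝕜) (A : Matrix n m 𝕜) : (a • A).flatten = a • A.flatten := rfl

variable [Fintype n] [Fintype m]

theorem Matrix.inner_flatten (A B : Matrix n m 𝕜) :
    inner 𝕜 A.flatten B.flatten = ∑ i, ∑ j, star (A i j) * B i j := by
  simp [PiLp.inner_apply, Fintype.sum_prod_type, mul_comm]

theorem Matrix.inner_flatten_vecMulVec (u u' : n → 𝕜) (v v' : m → 𝕜) :
    inner 𝕜 (vecMulVec u v).flatten (vecMulVec u' v').flatten =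
      (star u ⬝ᵥ u') * (star v ⬝ᵥ v') := by
  simp only [inner_flatten, vecMulVec_apply, dotProduct, Finset.sum_mul_sum, Pi.star_apply,
    star_mul']
  exact Finset.sum_congr rfl fun _ _ => Finset.sum_congr rfl fun _ _ => by ring

theorem Matrix.sum_normSq_eq_norm_flatten_sq (A : Matrix n m ℂ) :
    ∑ i, ∑ j, Complex.normSq (A i j) = ‖A.flatten‖ ^ 2 := by
  simp [EuclideanSpace.norm_sq_eq, Fintype.sum_prod_type, Complex.normSq_eq_norm_sq]

end Flatten

section DMD

variable {𝕜 n m r : Type*} [RCLike 𝕜] [Fintype r] [DecidableEq r]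

noncomputable def dmdReconstruction (Φ : Matrix n r 𝕜) (V : Matrix r m 𝕜) :
    (r → 𝕜) →ₗ[𝕜] EuclideanSpace 𝕜 (n × m) where
  toFun b := (Φ * diagonal b * V).flatten
  map_add' b c := by
    rw [show diagonal (b + c) = diagonal b + diagonal c from (diagonal_add b c).symm,
      Matrix.mul_add, Matrix.add_mul, flatten_add]
  map_smul' a b := by
    rw [diagonal_smul, Matrix.mul_smul, Matrix.smul_mul, flatten_smul]
    rfl

theorem dmdReconstruction_apply (Φ : Matrix n r 𝕜) (V : Matrix r m 𝕜) (b : r → 𝕜) :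
    dmdReconstruction Φ V b = (Φ * diagonal b * V).flatten := rfl

theorem dmdReconstruction_single (Φ : Matrix n r 𝕜) (V : Matrix r m 𝕜) (k : r) :
    dmdReconstruction Φ V (Pi.single k 1) = (vecMulVec (Φ.col k) (V.row k)).flatten := by
  ext p
  simp [dmdReconstruction_apply, mul_apply, diagonal_apply, vecMulVec_apply, Pi.single_apply]

variable [Fintype m]

theorem dmdReconstruction_injective {Φ : Matrix n r 𝕜} {V : Matrix r m 𝕜}
    (hΦ : Function.Injective Φ.mulVec) (hV : ∀ c : r → 𝕜, c ᵥ* V = 0 → c = 0) :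
    Function.Injective (dmdReconstruction Φ V) := by
  refine (injective_iff_map_eq_zero _).2 fun b hb => hV b ?_
  have hΦDV : Φ * (diagonal b * V) = 0 := by
    ext i j
    simpa [dmdReconstruction_apply, Matrix.mul_assoc] using congrArg (· (i, j)) hb
  have hDV : diagonal b * V = 0 := mulVec_injective <| funext fun v => hΦ <| by
    rw [mulVec_mulVec, hΦDV, zero_mulVec, zero_mulVec, mulVec_zero]
  calc b ᵥ* V = 1 ᵥ* (diagonal b * V) := by ext j; simp [vecMul, dotProduct, diagonal_mul]
    _ = 0 := by rw [hDV, vecMul_zero]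

variable [Fintype n]

theorem inner_dmdReconstruction_single_single (Φ : Matrix n r 𝕜) (V : Matrix r m 𝕜) (k j : r) :
    inner 𝕜 (dmdReconstruction Φ V (Pi.single k 1)) (dmdReconstruction Φ V (Pi.single j 1)) =
      hadamard (Φᴴ * Φ) ((V * Vᴴ).map star) k j := by
  rw [dmdReconstruction_single, dmdReconstruction_single, inner_flatten_vecMulVec]
  simp [mul_apply, dotProduct]

theorem inner_dmdReconstruction_single_left (Φ : Matrix n r 𝕜) (V : Matrix r m 𝕜) (k : r)
    (b : r → 𝕜) :
    inner 𝕜 (dmdReconstruction Φ V (Pi.single k 1)) (dmdReconstruction Φ V b) =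
      (hadamard (Φᴴ * Φ) ((V * Vᴴ).map star) *ᵥ b) k := by
  conv_lhs => rw [pi_eq_sum_univ' b]
  simp only [map_sum, map_smul, inner_sum, inner_smul_right, inner_dmdReconstruction_single_single,
    mulVec, dotProduct, mul_comm]

theorem inner_dmdReconstruction_single_flatten (Φ : Matrix n r 𝕜) (V : Matrix r m 𝕜) (k : r)
    (X : Matrix n m 𝕜) :
    inner 𝕜 (dmdReconstruction Φ V (Pi.single k 1)) X.flatten = star ((V * Xᴴ * Φ) k k) := by
  rw [dmdReconstruction_single, inner_flatten]
  simp only [mul_apply, vecMulVec_apply, Finset.sum_mul, star_sum, star_mul', conjTranspose_apply,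
    star_star, col_apply, row_apply]
  exact Finset.sum_congr rfl fun _ _ => Finset.sum_congr rfl fun _ _ => by ring

end DMD

/-- Optimal DMD amplitudes: for DMD modes `Φ` with full column rank and a
Vandermonde matrix `V_and` with full row rank, the map
`b ↦ ‖X − Φ diag(b) V_and‖_F²` is a strictly convex quadratic with a unique
minimizer, and the minimizer satisfies the linear system
`((Φ*Φ) ∘ conj(V_and V_and*)) b = conj(diag(V_and X* Φ))`. -/
theorem optimal_dmd_amplitudes {N r M : ℕ}
    (X : Matrix (Fin N) (Fin M) ℂ)
    (Φ : Matrix (Fin N) (Fin r) ℂ) (hΦ : Function.Injective Φ.mulVec)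
    (Vand : Matrix (Fin r) (Fin M) ℂ)
    (hVand : ∀ c : Fin r → ℂ, Vand.vecMul c = 0 → c = 0)
    (f : (Fin r → ℂ) → ℝ)
    (hf : f = fun b => ∑ i, ∑ j,
      Complex.normSq ((X - Φ * Matrix.diagonal b * Vand) i j)) :
    StrictConvexOn ℝ Set.univ f ∧
    (∃! b : Fin r → ℂ, ∀ b' : Fin r → ℂ, f b ≤ f b') ∧
    (∀ b : Fin r → ℂ, (∀ b' : Fin r → ℂ, f b ≤ f b') →
      (Matrix.hadamard (Φᴴ * Φ) ((Vand * Vandᴴ).map star)).mulVec b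
        = fun i => star ((Vand * Xᴴ * Φ) i i)) := by
  have hT := dmdReconstruction_injective hΦ hVand
  have hfT : f = fun b => ‖X.flatten - dmdReconstruction Φ Vand b‖ ^ 2 := by
    simp only [hf, sum_normSq_eq_norm_flatten_sq, flatten_sub, dmdReconstruction_apply]
  subst hfT
  refine ⟨strictConvexOn_norm_sub_sq hT _, ?_, fun b hb => funext fun k => ?_⟩
  · simpa only [isMinOn_univ_iff] using existsUnique_isMinOn_norm_sub_sq hT X.flatten
  have hnormal := (isMinOn_norm_sub_sq_iff hT).1 (isMinOn_univ_iff.2 hb) (Pi.single k 1)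
  rwa [inner_sub_right, sub_eq_zero, inner_dmdReconstruction_single_flatten,
    inner_dmdReconstruction_single_left, eq_comm] at hnormal
end
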